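/- For conditional events A|H and B|K, the Goodman–Nguyen inclusion A|H ⊆ B|K (i.e., AH¬BK = AH¬K = ¬HBK = ∅) holds if and only if the Kleene–de Finetti conjunction satisfies (A|H) ∧_K (B|K) = A|H, where (A|H) ∧_K (B|K) := AHBK | (AHBK ∨ ¬AH ∨ ¬BK). -/

import Mathlib

/-- The three truth values of de Finetti's trivalent logic. -/
inductive TV : Type
  | true : TV
  | false : TV
  | void : TV
deriving DecidableEq

open Classical in
/-- The conditional event `E|F`: true on `E∩F`, false on `Eᶜ∩F`, void on `Fᶜ`. -/
noncomputable def condEv {Ω : Type*} (E F : Set Ω) : Ω → TV := fun ω =>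
  if ω ∈ F then (if ω ∈ E then TV.true else TV.false) else TV.void

/-- The Kleene–Łukasiewicz–Heyting–de Finetti conjunction
`(A|H) ∧_K (B|K) = AHBK | (AHBK ∨ ¬AH ∨ ¬BK)`. -/
noncomputable def conjK {Ω : Type*} (A H B K : Set Ω) : Ω → TV :=
  condEv (A ∩ H ∩ (B ∩ K)) (A ∩ H ∩ (B ∩ K) ∪ Aᶜ ∩ H ∪ Bᶜ ∩ K)

/-!
A conditional event `E|F` is determined by its conditioning event `F` and its true set `E ∩ F`.
So `(A|H) ∧_K (B|K) = A|H` amounts to `AHBK = AH`, i.e. `AH ⊆ BK`, together with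
`AHBK ∨ ¬AH ∨ ¬BK = H`; once `AHBK = AH` the left side is `H ∪ ¬BK`, so the second
condition reads `¬BK ⊆ H`, which under `AH ⊆ BK` is the same as `¬BK ⊆ ¬AH`.
-/

theorem condEv_eq_void_iff {Ω : Type*} {E F : Set Ω} {ω : Ω} :
    condEv E F ω = TV.void ↔ ω ∉ F := by
  unfold condEv; split_ifs <;> simp_all

theorem condEv_eq_true_iff {Ω : Type*} {E F : Set Ω} {ω : Ω} :
    condEv E F ω = TV.true ↔ ω ∈ E ∩ F := by
  unfold condEv; split_ifs <;> simp_all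

theorem condEv_eq_condEv_iff {Ω : Type*} {E F E' F' : Set Ω} :
    condEv E F = condEv E' F' ↔ F = F' ∧ E ∩ F = E' ∩ F' := by
  constructor
  · intro h
    refine ⟨Set.ext fun ω => ?_, Set.ext fun ω => ?_⟩
    · simpa only [condEv_eq_void_iff, eq_iff_iff, not_iff_not] using
        congrArg (· = TV.void) (congrFun h ω)
    · simpa only [condEv_eq_true_iff, eq_iff_iff] using congrArg (· = TV.true) (congrFun h ω)
  · rintro ⟨rfl, hE⟩
    funext ω
    have hE' : ω ∈ E ∩ F ↔ ω ∈ E' ∩ F := by rw [hE]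
    simp only [Set.mem_inter_iff] at hE'
    unfold condEv
    split_ifs <;> simp_all

theorem gn_iff_conjK_eq_general {Ω : Type*} (A H B K : Set Ω) :
    (A ∩ H ⊆ B ∩ K ∧ Bᶜ ∩ K ⊆ Aᶜ ∩ H) ↔ conjK A H B K = condEv A H := by
  rw [conjK, condEv_eq_condEv_iff,
    Set.inter_eq_left.mpr (Set.subset_union_left.trans Set.subset_union_left), Set.inter_eq_left,
    and_comm]
  refine and_congr_left fun hAH => ?_
  rw [Set.inter_eq_left.mpr hAH, ← Set.union_inter_distrib_right, Set.union_compl_self,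
    Set.univ_inter, Set.union_eq_left, Set.subset_inter_iff, and_iff_right_iff_imp]
  exact fun hH ω hω hA => hω.1 (hAH ⟨hA, hH hω⟩).1

/-- Property P1 for `∧_K`: the Goodman–Nguyen inclusion `A|H ⊆ B|K`
(i.e. `AH ⊆ BK` and `¬BK ⊆ ¬AH`) holds iff `(A|H) ∧_K (B|K) = A|H`. -/
theorem gn_iff_conjK_eq {Ω : Type*} (A H B K : Set Ω)
    (hH : H.Nonempty) (hK : K.Nonempty) :
    (A ∩ H ⊆ B ∩ K ∧ Bᶜ ∩ K ⊆ Aᶜ ∩ H) ↔ conjK A H B K = condEv A H :=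
  gn_iff_conjK_eq_general A H B K
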